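/- Let A be a finite set, β > 0, R ≥ 0, π_ref a full-support probability mass function on A, r*: A → [0, R], and let π* be the Gibbs policy π*(a) ∝ π_ref(a)exp(r*(a)/β). Suppose π is a full-support probability mass function on A satisfying |log(π(a)/π_ref(a))| ≤ R/β for all a. Then the coverage coefficient Cov(π*|π) := Σ_a π*(a)²/π(a) satisfies Cov(π*|π) ≤ 1 + κ(e^{2R/β})·KL(π‖π*), where κ(x) = (x − 1)²/(x − 1 − log x). -/

import Mathlib

/-!
Write `t = π*(a)/π(a)`. Since `π*` and `π` both sum to one, `Cov(π*|π) - 1 = ∑ π (t - 1)²` and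
`KL(π‖π*) = ∑ π (t - 1 - log t)`, so it suffices to bound `(t - 1)² ≤ κ(ζ) (t - 1 - log t)`
pointwise for `0 < t ≤ ζ`. Since `π ≥ e^{-R/β} π_ref` and `π* ≤ e^{R/β} π_ref` (the
normaliser is at least one), indeed `t ≤ e^{2R/β} = ζ`. The pointwise bound holds because the
difference `κ(ζ)(s - 1 - log s) - (s - 1)²` vanishes at `s = 1` and `s = ζ` and has derivative
`(s - 1)(κ(ζ) - 2s)/s`, where `κ(ζ) > 2`.
-/

open Finset Set

section

open Real

noncomputable def kappa (x : ℝ) : ℝ := (x - 1) ^ 2 / (x - 1 - log x)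

lemma sub_one_sub_log_pos {x : ℝ} (hx0 : 0 < x) (hx1 : x ≠ 1) : 0 < x - 1 - log x := by
  linarith [log_lt_sub_one_of_pos hx0 hx1]

lemma add_one_le_kappa {x : ℝ} (hx : 1 < x) : x + 1 ≤ kappa x := by
  have hd := sub_one_sub_log_pos (by linarith) hx.ne'
  have hlog : 2 * (x - 1) / (x - 1 + 2) ≤ log (1 + (x - 1)) :=
    le_log_one_add_of_nonneg (by linarith)
  rw [add_sub_cancel, div_le_iff₀ (by linarith)] at hlog
  rw [kappa, le_div_iff₀ hd]
  nlinarith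

lemma kappa_mul_sub_one_sub_log {x : ℝ} (hx : 1 < x) : kappa x * (x - 1 - log x) = (x - 1) ^ 2 :=
  div_mul_cancel₀ _ (sub_one_sub_log_pos (by linarith) hx.ne').ne'

noncomputable def kappaGap (c s : ℝ) : ℝ := c * (s - 1 - log s) - (s - 1) ^ 2

section KappaGap

variable {c : ℝ}

lemma hasDerivAt_kappaGap {s : ℝ} (hs : 0 < s) :
    HasDerivAt (kappaGap c) ((s - 1) * (c - 2 * s) / s) s := by
  have h := ((((hasDerivAt_id' s).sub_const 1).sub (hasDerivAt_log hs.ne')).const_mul c).sub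
    (((hasDerivAt_id' s).sub_const 1).fun_pow 2)
  refine h.congr_deriv ?_
  field_simp
  ring

lemma continuousOn_kappaGap {D : Set ℝ} (hD : D ⊆ Ioi 0) : ContinuousOn (kappaGap c) D :=
  fun _ hs => (hasDerivAt_kappaGap (hD hs)).continuousAt.continuousWithinAt

lemma kappaGap_monotoneOn {a b : ℝ} (ha : 0 < a)
    (hsign : ∀ s ∈ Ioo a b, 0 ≤ (s - 1) * (c - 2 * s)) : MonotoneOn (kappaGap c) (Icc a b) := by
  refine monotoneOn_of_hasDerivWithinAt_nonneg (f' := fun s => (s - 1) * (c - 2 * s) / s)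
    (convex_Icc a b)
    (continuousOn_kappaGap fun s hs => ha.trans_le hs.1) (fun s hs => ?_) (fun s hs => ?_)
  all_goals rw [interior_Icc] at hs
  · exact (hasDerivAt_kappaGap (ha.trans hs.1)).hasDerivWithinAt
  · exact div_nonneg (hsign s hs) (ha.trans hs.1).le

lemma kappaGap_antitoneOn {a b : ℝ} (ha : 0 < a)
    (hsign : ∀ s ∈ Ioo a b, (s - 1) * (c - 2 * s) ≤ 0) : AntitoneOn (kappaGap c) (Icc a b) := by
  refine antitoneOn_of_hasDerivWithinAt_nonpos (f' := fun s => (s - 1) * (c - 2 * s) / s)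
    (convex_Icc a b)
    (continuousOn_kappaGap fun s hs => ha.trans_le hs.1) (fun s hs => ?_) (fun s hs => ?_)
  all_goals rw [interior_Icc] at hs
  · exact (hasDerivAt_kappaGap (ha.trans hs.1)).hasDerivWithinAt
  · exact div_nonpos_of_nonpos_of_nonneg (hsign s hs) (ha.trans hs.1).le

end KappaGap

lemma kappaGap_nonneg {ζ t : ℝ} (hζ : 1 < ζ) (ht : 0 < t) (htζ : t ≤ ζ) :
    0 ≤ kappaGap (kappa ζ) t := by
  have hκ := add_one_le_kappa hζ
  have h_one : kappaGap (kappa ζ) 1 = 0 := by simp [kappaGap]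
  have h_ζ : kappaGap (kappa ζ) ζ = 0 := by
    rw [kappaGap, kappa_mul_sub_one_sub_log hζ, sub_self]
  rcases le_or_gt t 1 with ht1 | ht1
  · rw [← h_one]
    refine kappaGap_antitoneOn ht (fun s hs => ?_) ⟨le_rfl, ht1⟩ ⟨ht1, le_rfl⟩ ht1
    nlinarith [hs.2]
  rcases le_or_gt (2 * t) (kappa ζ) with htκ | htκ
  · rw [← h_one]
    refine kappaGap_monotoneOn one_pos (fun s hs => ?_) ⟨le_rfl, ht1.le⟩ ⟨ht1.le, le_rfl⟩ ht1.le
    nlinarith [hs.1, hs.2]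
  · rw [← h_ζ]
    refine kappaGap_antitoneOn ht (fun s hs => ?_) ⟨le_rfl, htζ⟩ ⟨htζ, le_rfl⟩ htζ
    nlinarith [hs.1]

section Distributions

variable {ι : Type*} [Fintype ι] {p q : ι → ℝ}

lemma sum_mul_div_sub_one_sq (hp : ∀ i, 0 < p i) (hp1 : ∑ i, p i = 1) (hq1 : ∑ i, q i = 1) :
    ∑ i, p i * (q i / p i - 1) ^ 2 = ∑ i, q i ^ 2 / p i - 1 := by
  have h : ∀ i, p i * (q i / p i - 1) ^ 2 = q i ^ 2 / p i - 2 * q i + p i := fun i => by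
    field_simp [(hp i).ne']
    ring
  simp only [h, sum_add_distrib, sum_sub_distrib, ← mul_sum, hp1, hq1]
  ring

lemma sum_mul_div_sub_one_sub_log (hp : ∀ i, 0 < p i) (hp1 : ∑ i, p i = 1)
    (hq1 : ∑ i, q i = 1) :
    ∑ i, p i * (q i / p i - 1 - log (q i / p i)) = ∑ i, p i * log (p i / q i) := by
  have h : ∀ i, p i * (q i / p i - 1 - log (q i / p i)) = q i - p i + p i * log (p i / q i) :=
    fun i => by
      rw [← neg_neg (log (q i / p i)), ← log_inv, inv_div, mul_sub, mul_sub,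
        mul_div_cancel₀ _ (hp i).ne']
      ring
  simp only [h, sum_add_distrib, sum_sub_distrib, hp1, hq1, sub_self, zero_add]

theorem sum_sq_div_le_one_add_kappa_mul_sum_mul_log {ζ : ℝ} (hζ : 1 ≤ ζ)
    (hp : ∀ i, 0 < p i) (hq : ∀ i, 0 < q i) (hp1 : ∑ i, p i = 1) (hq1 : ∑ i, q i = 1)
    (hqp : ∀ i, q i ≤ ζ * p i) :
    ∑ i, q i ^ 2 / p i ≤ 1 + kappa ζ * ∑ i, p i * log (p i / q i) := by
  rcases hζ.eq_or_lt with rfl | hζ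
  -- `kappa 1 = 0 / 0 = 0` is a junk value, but here `q = p` and both sides equal one.
  · have hq_eq : ∀ i, q i = p i := by
      simp only [one_mul] at hqp
      have := (sum_eq_sum_iff_of_le fun i _ => hqp i).1 (hq1.trans hp1.symm)
      exact fun i => this i (mem_univ i)
    simp [hq_eq, sq, div_self (hp _).ne', hp1]
  rw [← sub_le_iff_le_add', ← sum_mul_div_sub_one_sq hp hp1 hq1,
    ← sum_mul_div_sub_one_sub_log hp hp1 hq1, mul_sum]
  refine sum_le_sum fun i _ => ?_
  rw [mul_left_comm]
  refine mul_le_mul_of_nonneg_left (sub_nonneg.1 (kappaGap_nonneg hζ (div_pos (hq i) (hp i)) ?_))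
    (hp i).le
  rw [div_le_iff₀ (hp i)]
  exact hqp i

end Distributions

lemma gibbs_le_exp_mul {β R r Z p₀ p : ℝ} (hβ : 0 < β) (hr : r ≤ R) (hZ : 1 ≤ Z)
    (hp₀ : 0 < p₀) (hp : 0 < p) (hratio : |log (p / p₀)| ≤ R / β) :
    p₀ * exp (r / β) / Z ≤ exp (2 * R / β) * p := by
  have hp₀_le : p₀ ≤ exp (R / β) * p := by
    have h := (le_log_iff_exp_le (div_pos hp hp₀)).1 (abs_le.1 hratio).1
    rwa [exp_neg, inv_le_iff_one_le_mul₀ (exp_pos _), div_mul_eq_mul_div, le_div_iff₀ hp₀,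
      one_mul, mul_comm] at h
  calc p₀ * exp (r / β) / Z ≤ p₀ * exp (r / β) := div_le_self (by positivity) hZ
    _ ≤ exp (R / β) * p * exp (R / β) := by gcongr
    _ = exp (2 * R / β) * p := by rw [mul_right_comm, ← exp_add]; ring_nf

end

theorem coverage_le_one_add_kappa_mul_kl_general
    {A : Type*} [Fintype A]
    (β R : ℝ) (hβ : 0 < β) (hR : 0 ≤ R)
    (πref πstar π : A → ℝ) (rstar : A → ℝ)
    (href_pos : ∀ a, 0 < πref a) (href_sum : ∑ a, πref a = 1)
    (hr : ∀ a, rstar a ∈ Set.Icc 0 R)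
    (Z : ℝ) (hZ : Z = ∑ a, πref a * Real.exp (rstar a / β))
    (hgibbs : ∀ a, πstar a = πref a * Real.exp (rstar a / β) / Z)
    (hπ_pos : ∀ a, 0 < π a) (hπ_sum : ∑ a, π a = 1)
    (hπ_ratio : ∀ a, |Real.log (π a / πref a)| ≤ R / β) :
    ∑ a, (πstar a) ^ 2 / π a ≤
      1 + ((Real.exp (2 * R / β) - 1) ^ 2 /
            (Real.exp (2 * R / β) - 1 - Real.log (Real.exp (2 * R / β)))) *
          ∑ a, π a * Real.log (π a / πstar a) := by
  have hZ1 : 1 ≤ Z := by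
    rw [hZ, ← href_sum]
    exact sum_le_sum fun a _ =>
      le_mul_of_one_le_right (href_pos a).le (Real.one_le_exp (div_nonneg (hr a).1 hβ.le))
  have hZ0 : 0 < Z := by linarith
  have hstar_pos : ∀ a, 0 < πstar a := fun a => by
    rw [hgibbs a]
    exact div_pos (mul_pos (href_pos a) (Real.exp_pos _)) hZ0
  have hstar_sum : ∑ a, πstar a = 1 := by
    simp only [hgibbs, ← sum_div, ← hZ, div_self hZ0.ne']
  have hstar_le : ∀ a, πstar a ≤ Real.exp (2 * R / β) * π a := fun a =>
    hgibbs a ▸ gibbs_le_exp_mul hβ (hr a).2 hZ1 (href_pos a) (hπ_pos a) (hπ_ratio a)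
  exact sum_sq_div_le_one_add_kappa_mul_sum_mul_log (Real.one_le_exp (by positivity))
    hπ_pos hstar_pos hπ_sum hstar_sum hstar_le

theorem coverage_le_one_add_kappa_mul_kl
    {A : Type*} [Fintype A] [Nonempty A]
    (β R : ℝ) (hβ : 0 < β) (hR : 0 ≤ R)
    (πref πstar π : A → ℝ) (rstar : A → ℝ)
    (href_pos : ∀ a, 0 < πref a) (href_sum : ∑ a, πref a = 1)
    (hr : ∀ a, rstar a ∈ Set.Icc 0 R)
    (Z : ℝ) (hZ : Z = ∑ a, πref a * Real.exp (rstar a / β))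
    (hgibbs : ∀ a, πstar a = πref a * Real.exp (rstar a / β) / Z)
    (hπ_pos : ∀ a, 0 < π a) (hπ_sum : ∑ a, π a = 1)
    (hπ_ratio : ∀ a, |Real.log (π a / πref a)| ≤ R / β) :
    ∑ a, (πstar a) ^ 2 / π a ≤
      1 + ((Real.exp (2 * R / β) - 1) ^ 2 /
            (Real.exp (2 * R / β) - 1 - Real.log (Real.exp (2 * R / β)))) *
          ∑ a, π a * Real.log (π a / πstar a) :=
  coverage_le_one_add_kappa_mul_kl_general β R hβ hR πref πstar π rstar href_pos href_sum hr Z hZ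
    hgibbs hπ_pos hπ_sum hπ_ratio
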